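/- arXiv:1701.07111 — 2 statements merged into one kernel-verified Lean document; each statement's English description precedes it below -/
import Mathlib

section
/- Let 0 ≤ η ≤ 1, ε > 0, and define Υ(n₁,n₂,k) = (3.5^{3.5}/Γ(3.5)) · (η^{n₂}(1-η)^{n₁}/(n₁! n₂!)) · Γ(n₁+n₂+k) / (ε^k (1+3.5/ε)^{n₁+n₂+k}). Then summing Υ(n₁,n₂,3.5) over n₂ ∈ ℕ for fixed n₁ gives the marginal PMF (3.5^{3.5} Γ(n₁+3.5) ε₁^{n₁} (3.5+ε₁)^{-n₁-3.5})/(n₁! Γ(3.5)) with ε₁ = (1-η)ε. -/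
/-!
With `a = n₁ + c` and `x = η / (1 + c/ε) < 1`, the sum over `n₂` is, up to factors
independent of `n₂`, the negative binomial series `∑ Γ(a + n) xⁿ / n! = Γ(a) (1 - x)^(-a)`
(since `Γ(a + n) / Γ(a)` is the rising factorial `(a)ₙ`). The leftover powers collapse because
`(1 + c/ε)(1 - x) = (c + (1 - η)ε) / ε`.
-/

open Polynomial

namespace Real

theorem Gamma_add_nat_eq_ascPochhammer_mul {a : ℝ} (ha : ∀ k : ℕ, a ≠ -k) (n : ℕ) :
    Gamma (a + n) = (ascPochhammer ℝ n).eval a * Gamma a := by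
  induction n with
  | zero => simp
  | succ n ih =>
    have hne : a + n ≠ 0 := fun h => ha n (by linarith)
    rw [Nat.cast_succ, ← add_assoc, Gamma_add_one hne, ih, ascPochhammer_succ_right,
      eval_mul, eval_add, eval_X, eval_natCast]
    ring

theorem choose_add_nat_sub_one_eq_ascPochhammer_div_factorial (a : ℝ) (n : ℕ) :
    Ring.choose (a + n - 1) n = (ascPochhammer ℝ n).eval a / n.factorial := by
  rw [Ring.choose_eq_smul, descPochhammer_smeval_eq_ascPochhammer, ascPochhammer_smeval_eq_eval,
    smul_eq_mul, inv_mul_eq_div, show a + n - 1 - n + 1 = a by ring]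

theorem hasSum_ascPochhammer_mul_pow_div_factorial (a : ℝ) {x : ℝ} (hx : |x| < 1) :
    HasSum (fun n : ℕ => (ascPochhammer ℝ n).eval a * x ^ n / n.factorial) ((1 - x) ^ (-a)) := by
  have hx_mem : x ∈ Metric.eball (0 : ℝ) 1 := by
    rwa [Metric.mem_eball, edist_zero_right, enorm_eq_nnnorm, ENNReal.coe_lt_one_iff,
      ← NNReal.coe_lt_one, coe_nnnorm, norm_eq_abs]
  have h := (one_div_one_sub_rpow_hasFPowerSeriesOnBall_zero a).hasSum hx_mem
  simp only [FormalMultilinearSeries.ofScalars_apply_eq, zero_add, smul_eq_mul,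
    choose_add_nat_sub_one_eq_ascPochhammer_div_factorial] at h
  rw [rpow_neg (by linarith [le_abs_self x]), ← one_div]
  simpa only [div_mul_eq_mul_div] using h

theorem hasSum_Gamma_add_nat_mul_pow_div_factorial {a : ℝ} (ha : ∀ k : ℕ, a ≠ -k) {x : ℝ}
    (hx : |x| < 1) :
    HasSum (fun n : ℕ => Gamma (a + n) * x ^ n / n.factorial) ((1 - x) ^ (-a) * Gamma a) := by
  simp only [Gamma_add_nat_eq_ascPochhammer_mul ha, mul_right_comm _ (Gamma a),
    mul_div_right_comm _ (Gamma a)]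
  exact (hasSum_ascPochhammer_mul_pow_div_factorial a hx).mul_right _

end Real

/-- `c` is the shape constant of the Gamma approximation of the cell area (`3.5` in the paper). -/
noncomputable def jointLoadPMF (c ε η : ℝ) (n₁ n₂ : ℕ) : ℝ :=
  c ^ c / Real.Gamma c * (η ^ n₂ * (1 - η) ^ n₁ / ((n₁.factorial : ℝ) * (n₂.factorial : ℝ))) *
    Real.Gamma ((n₁ : ℝ) + (n₂ : ℝ) + c) / (ε ^ c * (1 + c / ε) ^ ((n₁ : ℝ) + (n₂ : ℝ) + c))

noncomputable def loadPMF (c ε : ℝ) (n : ℕ) : ℝ :=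
  (c ^ c * Real.Gamma ((n : ℝ) + c) * ε ^ n * (c + ε) ^ (-(n : ℝ) - c)) /
    ((n.factorial : ℝ) * Real.Gamma c)

theorem tsum_jointLoadPMF_eq_loadPMF {c ε η : ℝ} (hc : 0 < c) (hε : 0 < ε) (hη0 : 0 ≤ η)
    (hη1 : η ≤ 1) (n₁ : ℕ) :
    ∑' n₂ : ℕ, jointLoadPMF c ε η n₁ n₂ = loadPMF c ((1 - η) * ε) n₁ := by
  rw [loadPMF]
  set p := 1 + c / ε with hp_def
  set a := (n₁ : ℝ) + c
  set m := c + (1 - η) * ε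
  have hp : 1 < p := by have := div_pos hc hε; linarith
  have hm : 0 < m := by nlinarith
  have hx1 : η / p < 1 := by rw [div_lt_one (by linarith)]; linarith
  have hx : |η / p| < 1 := by rwa [abs_of_nonneg (by positivity)]
  have hterm : ∀ n₂ : ℕ, jointLoadPMF c ε η n₁ n₂
      = c ^ c * (1 - η) ^ n₁ / (Real.Gamma c * n₁.factorial * ε ^ c * p ^ a) *
          (Real.Gamma (a + n₂) * (η / p) ^ n₂ / n₂.factorial) := by
    intro n₂
    rw [jointLoadPMF, ← hp_def, show (n₁ : ℝ) + n₂ + c = a + n₂ by ring, Real.rpow_add (by linarith),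
      Real.rpow_natCast, div_pow]
    field_simp
  have ha : ∀ j : ℕ, a ≠ -j := fun j =>
    ((neg_nonpos.2 j.cast_nonneg).trans_lt (by positivity : 0 < a)).ne'
  rw [tsum_congr hterm, tsum_mul_left,
    (Real.hasSum_Gamma_add_nat_mul_pow_div_factorial ha hx).tsum_eq]
  have hpx : p * (1 - η / p) = m / ε := by
    rw [mul_sub, mul_div_cancel₀ _ (by linarith), hp_def]; field_simp; ring
  have hscale : p ^ a * (1 - η / p) ^ a = m ^ a / ε ^ a := by
    rw [← Real.mul_rpow (by linarith) (by linarith), hpx, Real.div_rpow hm.le hε.le]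
  have hεa : ε ^ a = ε ^ n₁ * ε ^ c := by rw [Real.rpow_add hε, Real.rpow_natCast]
  have h1x : (1 - η / p) ^ a = m ^ a / (ε ^ n₁ * ε ^ c * p ^ a) := by
    rw [eq_div_iff (by positivity), ← hεa, (div_eq_iff (by positivity)).1 hscale.symm]; ring
  have hΓ : 0 < Real.Gamma c := Real.Gamma_pos_of_pos hc
  rw [show -(n₁ : ℝ) - c = -a by ring, Real.rpow_neg hm.le,
    Real.rpow_neg (by linarith), mul_pow, h1x]
  field_simp

/-- Marginalizing the joint UL/DL load PMF Υ(n₁,n₂,3.5) over n₂ gives the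
single-type load PMF with mean ε₁ = (1-η)ε. -/
theorem stmt3 (ε η : ℝ) (hε : 0 < ε) (hη0 : 0 ≤ η) (hη1 : η ≤ 1) (n₁ : ℕ) :
    ∑' n₂ : ℕ, ((3.5 : ℝ) ^ (3.5 : ℝ) / Real.Gamma 3.5 *
        (η ^ n₂ * (1 - η) ^ n₁ / ((n₁.factorial : ℝ) * (n₂.factorial : ℝ))) *
        Real.Gamma ((n₁ : ℝ) + (n₂ : ℝ) + 3.5) /
        (ε ^ (3.5 : ℝ) * (1 + 3.5 / ε) ^ ((n₁ : ℝ) + (n₂ : ℝ) + 3.5)))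
      = ((3.5 : ℝ) ^ (3.5 : ℝ) * Real.Gamma ((n₁ : ℝ) + 3.5) * ((1 - η) * ε) ^ n₁ *
          (3.5 + (1 - η) * ε) ^ (-(n₁ : ℝ) - 3.5)) / ((n₁.factorial : ℝ) * Real.Gamma 3.5) :=
  tsum_jointLoadPMF_eq_loadPMF (by norm_num) hε hη0 hη1 n₁
end

section
/- Let Z be a random variable taking values in [0, F] for an integer F ≥ 1, and define Ξ = (Z - ⌊Z⌋)·1(⌈Z⌉ = n) + (1 - (Z - ⌊Z⌋))·1(⌊Z⌋ = n) for a fixed integer n. Then E[Ξ] = ∫₀¹ P(n + r - 1 < Z < n + 1 - r) dr. -/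
/-!
Pointwise, the probability that `z` is rounded to `n` is the tent function
`max 0 (1 - |z - n|)`. The layer-cake formula writes the expectation of this `[0, 1]`-valued
variable as `∫₀¹ P(r < tent(Z)) dr`, and for `r ≥ 0` the event `r < tent(Z)` is exactly
`n + r - 1 < Z < n + 1 - r`.
-/

open MeasureTheory

theorem roundingWeight_eq_max_zero_one_sub_abs (z : ℝ) (n : ℤ) :
    (z - (⌊z⌋ : ℝ)) * (if ⌈z⌉ = n then (1 : ℝ) else 0)
      + (1 - (z - (⌊z⌋ : ℝ))) * (if ⌊z⌋ = n then (1 : ℝ) else 0)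
      = max 0 (1 - |z - n|) := by
  by_cases hfl : ⌊z⌋ = n
  · obtain ⟨hnz, hzn⟩ := Int.floor_eq_iff.mp hfl
    have hceil : ⌈z⌉ = n → z = n := fun hc => le_antisymm (hc ▸ Int.le_ceil z) hnz
    rw [abs_of_nonneg (by linarith), max_eq_right (by linarith), if_pos hfl, hfl]
    split_ifs with hc
    · rw [hceil hc]; ring
    · ring
  by_cases hc : ⌈z⌉ = n
  · obtain ⟨hnz, hzn⟩ := Int.ceil_eq_iff.mp hc
    have hzn' : z < n := hzn.lt_of_ne fun h => hfl (by rw [h, Int.floor_intCast])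
    have hfl' : (⌊z⌋ : ℝ) = n - 1 := by
      exact_mod_cast Int.floor_eq_iff.mpr ⟨by push_cast; linarith, by push_cast; linarith⟩
    rw [abs_of_neg (by linarith), max_eq_right (by linarith), if_pos hc, if_neg hfl, hfl']
    ring
  · have hfar : 1 ≤ |z - n| := by
      by_contra! h
      obtain ⟨h₁, h₂⟩ := abs_lt.mp h
      rcases le_or_gt (n : ℝ) z with hnz | hzn
      · exact hfl (Int.floor_eq_iff.mpr ⟨hnz, by linarith⟩)
      · exact hc (Int.ceil_eq_iff.mpr ⟨by linarith, hzn.le⟩)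
    rw [if_neg hc, if_neg hfl, max_eq_left (by linarith)]
    ring

theorem lt_max_zero_one_sub_abs_sub_iff {r z a : ℝ} (hr : 0 ≤ r) :
    r < max 0 (1 - |z - a|) ↔ a + r - 1 < z ∧ z < a + 1 - r := by
  rw [lt_max_iff, or_iff_right hr.not_gt, lt_sub_comm, abs_sub_lt_iff]
  constructor <;> rintro ⟨h₁, h₂⟩ <;> constructor <;> linarith

theorem integral_eq_intervalIntegral_measureReal_lt {α : Type*} [MeasurableSpace α]
    {μ : Measure α} [IsFiniteMeasure μ] {f : α → ℝ} (hf : AEStronglyMeasurable f μ)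
    {c : ℝ} (hc : 0 ≤ c) (hf0 : 0 ≤ᵐ[μ] f) (hfc : ∀ᵐ a ∂μ, f a ≤ c) :
    ∫ a, f a ∂μ = ∫ t in (0 : ℝ)..c, μ.real {a | t < f a} := by
  have hint : Integrable f μ := Integrable.of_bound hf c <| by
    filter_upwards [hf0, hfc] with a h0 hac
    rwa [Real.norm_eq_abs, abs_of_nonneg h0]
  rw [hint.integral_eq_integral_meas_lt hf0, intervalIntegral.integral_of_le hc]
  refine setIntegral_eq_of_subset_of_ae_sdiff_eq_zero nullMeasurableSet_Ioi
    Set.Ioc_subset_Ioi_self (.of_forall fun t ht => ?_)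
  have hct : c < t := (by simpa using ht : 0 < t ∧ c < t).2
  have hnull : μ {a | t < f a} = 0 := by
    simpa only [not_le] using ae_iff.mp (hfc.mono fun a ha => ha.trans hct.le)
  rw [measureReal_def, hnull, ENNReal.toReal_zero]

theorem stmt9_general {Ω : Type*} [MeasurableSpace Ω] (μ : Measure Ω) [IsProbabilityMeasure μ]
    (Z : Ω → ℝ) (hZ : Measurable Z) (n : ℤ) :
    ∫ ω, ((Z ω - (⌊Z ω⌋ : ℝ)) * (if ⌈Z ω⌉ = n then (1 : ℝ) else 0)
        + (1 - (Z ω - (⌊Z ω⌋ : ℝ))) * (if ⌊Z ω⌋ = n then (1 : ℝ) else 0)) ∂μ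
      = ∫ r in (0 : ℝ)..1,
          (μ {ω | (n : ℝ) + r - 1 < Z ω ∧ Z ω < (n : ℝ) + 1 - r}).toReal := by
  have hmeas : Measurable fun ω => max 0 (1 - |Z ω - n|) := by fun_prop
  simp_rw [roundingWeight_eq_max_zero_one_sub_abs]
  rw [integral_eq_intervalIntegral_measureReal_lt hmeas.aestronglyMeasurable zero_le_one
    (.of_forall fun _ => le_max_left _ _)
    (.of_forall fun _ => max_le zero_le_one (sub_le_self _ (abs_nonneg _)))]
  refine intervalIntegral.integral_congr fun r hr => ?_
  rw [Set.uIcc_of_le zero_le_one] at hr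
  simp only [measureReal_def, lt_max_zero_one_sub_abs_sub_iff hr.1]

/-- Key identity in Lemma 1: the randomized-rounding probability that Z rounds
to n equals ∫₀¹ P(n + r - 1 < Z < n + 1 - r) dr. -/
theorem stmt9 {Ω : Type*} [MeasurableSpace Ω] (μ : Measure Ω) [IsProbabilityMeasure μ]
    (F : ℕ) (hF : 1 ≤ F) (Z : Ω → ℝ) (hZ : Measurable Z)
    (hrange : ∀ ω, Z ω ∈ Set.Icc (0 : ℝ) (F : ℝ)) (n : ℤ) :
    ∫ ω, ((Z ω - (⌊Z ω⌋ : ℝ)) * (if ⌈Z ω⌉ = n then (1 : ℝ) else 0)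
        + (1 - (Z ω - (⌊Z ω⌋ : ℝ))) * (if ⌊Z ω⌋ = n then (1 : ℝ) else 0)) ∂μ
      = ∫ r in (0 : ℝ)..1,
          (μ {ω | (n : ℝ) + r - 1 < Z ω ∧ Z ω < (n : ℝ) + 1 - r}).toReal :=
  stmt9_general μ Z hZ n
end
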